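/- arXiv:math/0606650 — 3 statements merged into one kernel-verified Lean document; each statement's English description precedes it below -/
import Mathlib

section
/- Let Ω be a nonempty finite set, let μ be a probability distribution on Ω whose support is all of Ω, and for i.i.d. samples T_1,…,T_t drawn from μ let X_t = (1/t)·Σ_{i=1}^t 1/μ(T_i). Let p ≤ 1/2 and let A ⊆ Ω satisfy μ(A) ≤ p. Then for any a>1 and any t, Pr[ X_t ≤ a·|Ω∖A| ] ≥ 1 − 2pt − 1/a. -/
/-- Let `Ω` be a nonempty finite set, `μ` a probability distribution
on `Ω` whose support is all of `Ω`, and for i.i.d. samples `T_1,…,T_t` drawn from `μ`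
let `X_t = (1/t)·∑ 1/μ(T_i)`.  If `p ≤ 1/2` and `A ⊆ Ω` satisfies `μ(A) ≤ p`, then for
any `a > 1` and any `t`, `Pr[X_t ≤ a·|Ω∖A|] ≥ 1 − 2pt − 1/a`.  Here the probability is
over the product distribution on `(T_1,…,T_t)`, i.e., the probability of an event `E`
is `∑_{ω : E ω} ∏ i μ(ω i)`. -/
theorem sis_underestimates {Ω : Type*} [Fintype Ω] [Nonempty Ω] [DecidableEq Ω]
    (μ : Ω → ℝ) (hpos : ∀ T, 0 < μ T) (hsum : ∑ T, μ T = 1)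
    (p : ℝ) (hp : p ≤ 1 / 2) (A : Finset Ω) (hA : ∑ T ∈ A, μ T ≤ p)
    (a : ℝ) (ha : 1 < a) (t : ℕ) :
    (∑ ω : Fin t → Ω,
        if (∑ i, 1 / μ (ω i)) / (t : ℝ) ≤ a * ((Finset.univ \ A).card : ℝ) then
          ∏ i, μ (ω i)
        else 0)
      ≥ 1 - 2 * p * (t : ℝ) - 1 / a := by
  classical
  set S := (Finset.univ \ A) with hSdef
  set c : ℝ := (S.card : ℝ) with hcdef
  set m : ℝ := ∑ T ∈ S, μ T with hmdef
  have hμA0 : 0 ≤ ∑ T ∈ A, μ T := Finset.sum_nonneg fun T _ => (hpos T).le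
  have hp0 : 0 ≤ p := hμA0.trans hA
  have hm_eq : m = 1 - ∑ T ∈ A, μ T := by
    rw [hmdef, hSdef, Finset.sum_sdiff_eq_sub (Finset.subset_univ A), hsum]
  have hm0 : 0 ≤ m := Finset.sum_nonneg fun T _ => (hpos T).le
  have hm1 : m ≤ 1 := by rw [hm_eq]; linarith
  have ha0 : (0:ℝ) < a := lt_trans one_pos ha
  have hSne : S.Nonempty := by
    rw [hSdef, Finset.sdiff_nonempty]
    intro hsub
    have h1 : (1:ℝ) ≤ ∑ T ∈ A, μ T := by
      rw [← hsum]
      exact Finset.sum_le_sum_of_subset_of_nonneg hsub fun T _ _ => (hpos T).le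
    linarith
  have hc1 : (1:ℝ) ≤ c := by rw [hcdef]; exact_mod_cast hSne.card_pos
  have hac : 0 < a * c := mul_pos ha0 (lt_of_lt_of_le one_pos hc1)
  rcases Nat.eq_zero_or_pos t with ht0 | ht
  · subst ht0
    rw [show (∑ ω : Fin 0 → Ω,
        if (∑ i, 1 / μ (ω i)) / ((0:ℕ) : ℝ) ≤ a * c then ∏ i, μ (ω i) else 0) = 1 by
      simp [hac.le]]
    have : 0 < 1/a := by positivity
    push_cast
    linarith
  have ht' : (0:ℝ) < t := by exact_mod_cast ht
  -- total mass on all-good samples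
  have key1 : ∑ ω ∈ Fintype.piFinset (fun _ : Fin t => S), ∏ i, μ (ω i) = m ^ t := by
    rw [Finset.sum_prod_piFinset S (fun _ x => μ x), ← hmdef, Finset.prod_const,
      Finset.card_univ, Fintype.card_fin]
  -- per-coordinate expectation
  have key2 : ∀ i : Fin t, ∑ ω ∈ Fintype.piFinset (fun _ : Fin t => S),
      (1 / μ (ω i)) * ∏ j, μ (ω j) = c * m ^ (t - 1) := by
    intro i
    have step : ∀ ω : Fin t → Ω, (1 / μ (ω i)) * ∏ j, μ (ω j)
        = ∏ j, (if j = i then (1:ℝ) else μ (ω j)) := by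
      intro ω
      rw [Finset.prod_eq_mul_prod_sdiff_singleton_of_mem (Finset.mem_univ i) (fun j => μ (ω j)),
        Finset.prod_eq_mul_prod_sdiff_singleton_of_mem (Finset.mem_univ i)
          (fun j => if j = i then (1:ℝ) else μ (ω j)), if_pos rfl, one_mul,
        ← mul_assoc, one_div, inv_mul_cancel₀ (hpos _).ne', one_mul]
      exact (Finset.prod_congr rfl fun j hj =>
        if_neg (by simpa using (Finset.mem_sdiff.mp hj).2)).symm
    calc ∑ ω ∈ Fintype.piFinset (fun _ : Fin t => S), (1 / μ (ω i)) * ∏ j, μ (ω j)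
        = ∑ ω ∈ Fintype.piFinset (fun _ : Fin t => S),
            ∏ j, (if j = i then (1:ℝ) else μ (ω j)) :=
          Finset.sum_congr rfl fun ω _ => step ω
      _ = ∏ j, ∑ x ∈ S, (if j = i then (1:ℝ) else μ x) :=
          Finset.sum_prod_piFinset S (fun j x => if j = i then (1:ℝ) else μ x)
      _ = c * m ^ (t - 1) := by
          rw [Finset.prod_eq_mul_prod_sdiff_singleton_of_mem (Finset.mem_univ i)]
          have h1 : ∑ x ∈ S, (if i = i then (1:ℝ) else μ x) = c := by
            simp [hcdef]
          have h2 : ∏ j ∈ Finset.univ \ {i}, (∑ x ∈ S, if j = i then (1:ℝ) else μ x)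
              = m ^ (t - 1) := by
            rw [Finset.prod_congr rfl (fun j hj => ?_), Finset.prod_const,
              Finset.card_sdiff_of_subset (Finset.singleton_subset_iff.mpr (Finset.mem_univ i)),
              Finset.card_univ, Fintype.card_fin, Finset.card_singleton]
            exact Finset.sum_congr rfl fun x _ =>
              if_neg (by simpa using (Finset.mem_sdiff.mp hj).2)
          rw [h1, h2]
  -- expectation of the sum
  have hexp : ∑ ω ∈ Fintype.piFinset (fun _ : Fin t => S),
      (∑ i, 1 / μ (ω i)) * ∏ j, μ (ω j) = (t : ℝ) * (c * m ^ (t - 1)) := by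
    calc ∑ ω ∈ Fintype.piFinset (fun _ : Fin t => S), (∑ i, 1 / μ (ω i)) * ∏ j, μ (ω j)
        = ∑ ω ∈ Fintype.piFinset (fun _ : Fin t => S),
            ∑ i, (1 / μ (ω i)) * ∏ j, μ (ω j) := by
          simp [Finset.sum_mul]
      _ = ∑ i : Fin t, ∑ ω ∈ Fintype.piFinset (fun _ : Fin t => S),
            (1 / μ (ω i)) * ∏ j, μ (ω j) := Finset.sum_comm
      _ = ∑ _i : Fin t, c * m ^ (t - 1) := Finset.sum_congr rfl fun i _ => key2 i
      _ = (t : ℝ) * (c * m ^ (t - 1)) := by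
          rw [Finset.sum_const, Finset.card_univ, Fintype.card_fin, nsmul_eq_mul]
  -- Markov bound on the bad set
  set B := (Fintype.piFinset (fun _ : Fin t => S)).filter
      (fun ω => ¬ ((∑ i, 1 / μ (ω i)) / (t : ℝ) ≤ a * c)) with hBdef
  have hBad : ∑ ω ∈ B, ∏ i, μ (ω i) ≤ 1 / a := by
    have h1 : ∀ ω ∈ B, ∏ i, μ (ω i)
        ≤ (1 / (a * c * t)) * ((∑ i, 1 / μ (ω i)) * ∏ j, μ (ω j)) := by
      intro ω hω
      have hω' : a * c < (∑ i, 1 / μ (ω i)) / t :=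
        not_le.mp ((Finset.mem_filter.mp hω).2)
      have hs : a * c * t ≤ ∑ i, 1 / μ (ω i) := ((lt_div_iff₀ ht').mp hω').le
      have hprod0 : 0 ≤ ∏ i, μ (ω i) := Finset.prod_nonneg fun i _ => (hpos _).le
      have hact : 0 < a * c * t := mul_pos hac ht'
      have : ∏ i, μ (ω i) ≤ ((∑ i, 1 / μ (ω i)) / (a * c * t)) * ∏ i, μ (ω i) :=
        le_mul_of_one_le_left hprod0 ((one_le_div hact).mpr hs)
      calc ∏ i, μ (ω i) ≤ ((∑ i, 1 / μ (ω i)) / (a * c * t)) * ∏ i, μ (ω i) := this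
        _ = (1 / (a * c * t)) * ((∑ i, 1 / μ (ω i)) * ∏ j, μ (ω j)) := by ring
    have h2 : ∑ ω ∈ B, (1 / (a * c * t)) * ((∑ i, 1 / μ (ω i)) * ∏ j, μ (ω j))
        ≤ ∑ ω ∈ Fintype.piFinset (fun _ : Fin t => S),
            (1 / (a * c * t)) * ((∑ i, 1 / μ (ω i)) * ∏ j, μ (ω j)) := by
      apply Finset.sum_le_sum_of_subset_of_nonneg (Finset.filter_subset _ _)
      intro ω _ _
      have h3 : 0 ≤ ∑ i, 1 / μ (ω i) := Finset.sum_nonneg fun i _ => (one_div_pos.mpr (hpos _)).le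
      have h4 : 0 ≤ ∏ i, μ (ω i) := Finset.prod_nonneg fun i _ => (hpos _).le
      have h5 : 0 < a * c * t := mul_pos hac ht'
      exact mul_nonneg (one_div_nonneg.mpr h5.le) (mul_nonneg h3 h4)
    calc ∑ ω ∈ B, ∏ i, μ (ω i)
        ≤ ∑ ω ∈ B, (1 / (a * c * t)) * ((∑ i, 1 / μ (ω i)) * ∏ j, μ (ω j)) :=
          Finset.sum_le_sum h1
      _ ≤ ∑ ω ∈ Fintype.piFinset (fun _ : Fin t => S),
            (1 / (a * c * t)) * ((∑ i, 1 / μ (ω i)) * ∏ j, μ (ω j)) := h2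
      _ = (1 / (a * c * t)) * ((t : ℝ) * (c * m ^ (t - 1))) := by
          rw [← Finset.mul_sum, hexp]
      _ = m ^ (t - 1) / a := by
          field_simp
      _ ≤ 1 / a := by
          gcongr
          exact pow_le_one₀ hm0 hm1
  -- assemble
  have hsub : ∑ ω ∈ Fintype.piFinset (fun _ : Fin t => S),
      (if (∑ i, 1 / μ (ω i)) / (t : ℝ) ≤ a * c then ∏ i, μ (ω i) else 0)
      ≤ ∑ ω : Fin t → Ω,
        (if (∑ i, 1 / μ (ω i)) / (t : ℝ) ≤ a * c then ∏ i, μ (ω i) else 0) := by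
    apply Finset.sum_le_sum_of_subset_of_nonneg (Finset.subset_univ _)
    intro ω _ _
    split
    · exact Finset.prod_nonneg fun i _ => (hpos _).le
    · exact le_refl 0
  have htot := Finset.sum_filter_add_sum_filter_not
      (Fintype.piFinset (fun _ : Fin t => S))
      (fun ω => (∑ i, 1 / μ (ω i)) / (t : ℝ) ≤ a * c)
      (fun ω => ∏ i, μ (ω i))
  rw [key1] at htot
  have hsplit : ∑ ω ∈ Fintype.piFinset (fun _ : Fin t => S),
      (if (∑ i, 1 / μ (ω i)) / (t : ℝ) ≤ a * c then ∏ i, μ (ω i) else 0)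
      = m ^ t - ∑ ω ∈ B, ∏ i, μ (ω i) := by
    rw [← Finset.sum_filter, hBdef]
    linarith [htot]
  have hber : 1 - 2 * p * (t : ℝ) ≤ m ^ t := by
    have h := one_add_mul_le_pow (a := -(∑ T ∈ A, μ T)) (by linarith) t
    have h2 : (1 + -(∑ T ∈ A, μ T)) = m := by rw [hm_eq]; ring
    rw [h2] at h
    nlinarith [mul_le_mul_of_nonneg_left hA ht'.le, mul_nonneg hp0 ht'.le]
  linarith [hsub, hsplit, hBad, hber]
end

section
/- Let m, d_r, d_c be integers with 1 ≤ d_c ≤ m and 1 ≤ d_r ≤ n, where n = m + d_r − d_c. The number of (m+1)×(n+1) 0/1 matrices with row sums (1,1,…,1,d_r) (last row has sum d_r) and column sums (1,1,…,1,d_c) (last column has sum d_c) equals C(m, d_c)·C(n, d_r)·(m−d_c)! + C(m, d_c−1)·C(n, d_r−1)·(m−d_c+1)!. -/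
namespace SISBCT

/-- A 0/1 table with `M` rows and `N` columns, represented as a Boolean matrix. -/
abbrev Table (M N : ℕ) := Fin M → Fin N → Bool

/-- The sum of the entries in row `i`. -/
def rowSum {M N : ℕ} (T : Table M N) (i : Fin M) : ℕ := ∑ j, (T i j).toNat

/-- The sum of the entries in column `j`. -/
def colSum {M N : ℕ} (T : Table M N) (j : Fin N) : ℕ := ∑ i, (T i j).toNat

/-- `Ω_{r,c}`: the set of 0/1 tables with row sums `r` and column sums `c`. -/
def tables {M N : ℕ} (r : Fin M → ℕ) (c : Fin N → ℕ) : Finset (Table M N) :=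
  Finset.univ.filter fun T => (∀ i, rowSum T i = r i) ∧ (∀ j, colSum T j = c j)

/-- The vector `(1,…,1,d)` on `m+1` coordinates (the last coordinate equals `d`). -/
def onesVec (m d : ℕ) : Fin (m + 1) → ℕ := fun i => if i = Fin.last m then d else 1

/-! ### Auxiliary lemmas -/

lemma sum_toNat_eq_card {k : ℕ} (f : Fin k → Bool) :
    ∑ j, (f j).toNat = (Finset.univ.filter fun j => f j = true).card := by
  rw [Finset.card_filter]
  exact Finset.sum_congr rfl fun j _ => by cases f j <;> simp

lemma sum_toNat_decide_eq_card {k : ℕ} (P : Fin k → Prop) [DecidablePred P] :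
    ∑ j, (decide (P j)).toNat = (Finset.univ.filter P).card := by
  rw [sum_toNat_eq_card]
  congr 1
  ext j
  simp

lemma existsUnique_of_sum_one {k : ℕ} {f : Fin k → Bool} (h : ∑ j, (f j).toNat = 1) :
    ∃! j, f j = true := by
  rw [sum_toNat_eq_card] at h
  obtain ⟨a, ha⟩ := Finset.card_eq_one.mp h
  refine ⟨a, ?_, fun b hb => ?_⟩
  · have : a ∈ Finset.univ.filter fun j => f j = true := ha ▸ Finset.mem_singleton_self a
    exact (Finset.mem_filter.mp this).2
  · have : b ∈ Finset.univ.filter fun j => f j = true :=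
      Finset.mem_filter.mpr ⟨Finset.mem_univ _, hb⟩
    rw [ha] at this
    exact Finset.mem_singleton.mp this

lemma eq_of_sum_one {k : ℕ} {f : Fin k → Bool} (h : ∑ j, (f j).toNat = 1)
    {a b : Fin k} (ha : f a = true) (hb : f b = true) : a = b := by
  obtain ⟨c, -, hc⟩ := existsUnique_of_sum_one h
  rw [hc a ha, hc b hb]

/-! ### The model type -/

/-- The combinatorial model: a bit `ε` (the corner entry), the set `A` of non-last rows
with a one in the last column, the set `B` of non-last columns with a one in the last
row, and a bijection between the remaining rows and columns. -/
abbrev Model (m n dc dr : ℕ) : Type :=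
  Σ ε : Bool, Σ A : {A : Finset (Fin m) // A.card = dc - ε.toNat},
    Σ B : {B : Finset (Fin n) // B.card = dr - ε.toNat},
      ({i : Fin m // i ∉ A.1} ≃ {j : Fin n // j ∉ B.1})

/-- Decode a model into a table. -/
def dec {m n dc dr : ℕ} : Model m n dc dr → Table (m + 1) (n + 1)
  | ⟨ε, ⟨A, _⟩, ⟨B, _⟩, e⟩ => fun i j =>
    Fin.lastCases
      (Fin.lastCases ε (fun j' => decide (j' ∈ B)) j)
      (fun i' => Fin.lastCases (decide (i' ∈ A))
        (fun j' => decide (∃ x : {a : Fin m // a ∉ A}, x.1 = i' ∧ (e x).1 = j')) j) i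

section DecLemmas

variable {m n dc dr : ℕ} (ε : Bool) (A : Finset (Fin m)) (hA : A.card = dc - ε.toNat)
  (B : Finset (Fin n)) (hB : B.card = dr - ε.toNat)
  (e : {i : Fin m // i ∉ A} ≃ {j : Fin n // j ∉ B})

lemma dec_ll : dec (⟨ε, ⟨A, hA⟩, ⟨B, hB⟩, e⟩ : Model m n dc dr) (Fin.last m) (Fin.last n) = ε := by
  simp [dec]

lemma dec_lc (j : Fin n) :
    dec (⟨ε, ⟨A, hA⟩, ⟨B, hB⟩, e⟩ : Model m n dc dr) (Fin.last m) j.castSucc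
      = decide (j ∈ B) := by
  simp [dec]

lemma dec_cl (i : Fin m) :
    dec (⟨ε, ⟨A, hA⟩, ⟨B, hB⟩, e⟩ : Model m n dc dr) i.castSucc (Fin.last n)
      = decide (i ∈ A) := by
  simp [dec]

lemma dec_cc (i : Fin m) (j : Fin n) :
    dec (⟨ε, ⟨A, hA⟩, ⟨B, hB⟩, e⟩ : Model m n dc dr) i.castSucc j.castSucc
      = decide (∃ x : {a : Fin m // a ∉ A}, x.1 = i ∧ (e x).1 = j) := by
  simp [dec]

end DecLemmas

end SISBCT

namespace SISBCT

variable {m n dc dr : ℕ}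

lemma mem_tables_iff {M N : ℕ} (T : Table M N) (r : Fin M → ℕ) (c : Fin N → ℕ) :
    T ∈ tables r c ↔ (∀ i, rowSum T i = r i) ∧ (∀ j, colSum T j = c j) := by
  simp [tables]

lemma dec_mem (hdc1 : 1 ≤ dc) (hdr1 : 1 ≤ dr) (M : Model m n dc dr) :
    dec M ∈ tables (onesVec m dr) (onesVec n dc) := by
  obtain ⟨ε, ⟨A, hA⟩, ⟨B, hB⟩, e⟩ := M
  rw [mem_tables_iff]
  constructor
  · intro i
    induction i using Fin.lastCases with
    | last =>
      rw [rowSum, Fin.sum_univ_castSucc]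
      simp only [dec_ll, dec_lc]
      rw [sum_toNat_decide_eq_card]
      rw [Finset.filter_univ_mem]
      rw [hB]
      simp only [onesVec, if_pos rfl]
      cases ε <;> simp <;> omega
    | cast i =>
      rw [rowSum, Fin.sum_univ_castSucc]
      simp only [dec_cl, dec_cc]
      rw [sum_toNat_decide_eq_card]
      have hne : i.castSucc ≠ Fin.last m := (Fin.castSucc_lt_last i).ne
      rw [onesVec, if_neg hne]
      by_cases hi : i ∈ A
      · have hfil : (Finset.univ.filter fun j => ∃ x : {a : Fin m // a ∉ A}, x.1 = i ∧ (e x).1 = j) = ∅ := by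
          ext j
          simp only [Finset.mem_filter, Finset.mem_univ, true_and, Finset.notMem_empty, iff_false]
          rintro ⟨⟨i', hi'⟩, rfl, -⟩
          exact hi' hi
        rw [hfil]
        simp [hi]
      · have hfil : (Finset.univ.filter fun j => ∃ x : {a : Fin m // a ∉ A}, x.1 = i ∧ (e x).1 = j) = {(e ⟨i, hi⟩).1} := by
          ext j
          simp only [Finset.mem_filter, Finset.mem_univ, true_and, Finset.mem_singleton]
          constructor
          · rintro ⟨⟨i', hi'⟩, rfl, rfl⟩
            rfl
          · rintro rfl
            exact ⟨⟨i, hi⟩, rfl, rfl⟩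
        rw [hfil]
        simp [hi]
  · intro j
    induction j using Fin.lastCases with
    | last =>
      rw [colSum, Fin.sum_univ_castSucc]
      simp only [dec_ll, dec_cl]
      rw [sum_toNat_decide_eq_card]
      rw [Finset.filter_univ_mem]
      rw [hA]
      simp only [onesVec, if_pos rfl]
      cases ε <;> simp <;> omega
    | cast j =>
      rw [colSum, Fin.sum_univ_castSucc]
      simp only [dec_lc, dec_cc]
      rw [sum_toNat_decide_eq_card]
      have hne : j.castSucc ≠ Fin.last n := (Fin.castSucc_lt_last j).ne
      rw [onesVec, if_neg hne]
      by_cases hj : j ∈ B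
      · have hfil : (Finset.univ.filter fun i => ∃ x : {a : Fin m // a ∉ A}, x.1 = i ∧ (e x).1 = j) = ∅ := by
          ext i
          simp only [Finset.mem_filter, Finset.mem_univ, true_and, Finset.notMem_empty, iff_false]
          rintro ⟨x, -, hx2⟩
          exact (e x).2 (hx2 ▸ hj)
        rw [hfil]
        simp [hj]
      · have hfil : (Finset.univ.filter fun i => ∃ x : {a : Fin m // a ∉ A}, x.1 = i ∧ (e x).1 = j) = {(e.symm ⟨j, hj⟩).1} := by
          ext i
          simp only [Finset.mem_filter, Finset.mem_univ, true_and, Finset.mem_singleton]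
          constructor
          · rintro ⟨x, rfl, hx2⟩
            have : e x = ⟨j, hj⟩ := Subtype.ext hx2
            rw [← this, Equiv.symm_apply_apply]
          · rintro rfl
            exact ⟨e.symm ⟨j, hj⟩, rfl, by rw [Equiv.apply_symm_apply]⟩
        rw [hfil]
        simp [hj]

end SISBCT


namespace SISBCT
variable {m n dc dr : ℕ}

lemma dec_inj : Function.Injective (dec : Model m n dc dr → Table (m+1) (n+1)) := by
  rintro ⟨ε, ⟨A, hA⟩, ⟨B, hB⟩, e⟩ ⟨ε', ⟨A', hA'⟩, ⟨B', hB'⟩, e'⟩ h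
  have hee : ε = ε' := by
    have := congrFun (congrFun h (Fin.last m)) (Fin.last n)
    rwa [dec_ll, dec_ll] at this
  subst hee
  have hAA : A = A' := by
    ext i
    have := congrFun (congrFun h i.castSucc) (Fin.last n)
    rw [dec_cl, dec_cl] at this
    exact decide_eq_decide.mp this
  subst hAA
  have hBB : B = B' := by
    ext j
    have := congrFun (congrFun h (Fin.last m)) j.castSucc
    rw [dec_lc, dec_lc] at this
    exact decide_eq_decide.mp this
  subst hBB
  have heee : e = e' := by
    apply Equiv.ext
    rintro ⟨i, hi⟩
    have := congrFun (congrFun h i.castSucc) (e ⟨i, hi⟩).1.castSucc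
    rw [dec_cc, dec_cc] at this
    have h1 : (∃ x : {a : Fin m // a ∉ A}, x.1 = i ∧ (e x).1 = (e ⟨i, hi⟩).1) :=
      ⟨⟨i, hi⟩, rfl, rfl⟩
    have h2 : (∃ x : {a : Fin m // a ∉ A}, x.1 = i ∧ (e' x).1 = (e ⟨i, hi⟩).1) := by
      rw [decide_eq_decide] at this
      exact this.mp h1
    obtain ⟨⟨i', hi'⟩, h3, h4⟩ := h2
    cases h3
    exact Subtype.ext h4.symm
  subst heee
  rfl


lemma dec_surj (hdc1 : 1 ≤ dc) (hdcm : dc ≤ m) (hdr1 : 1 ≤ dr) (hn : n + dc = m + dr)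
    (T : Table (m+1) (n+1)) (hT : T ∈ tables (onesVec m dr) (onesVec n dc)) :
    ∃ M : Model m n dc dr, dec M = T := by
  rw [mem_tables_iff] at hT
  obtain ⟨hr, hc⟩ := hT
  have hrow1 : ∀ i : Fin m, ∑ j, (T i.castSucc j).toNat = 1 := by
    intro i
    have := hr i.castSucc
    rwa [rowSum, onesVec, if_neg (Fin.castSucc_lt_last i).ne] at this
  have hcol1 : ∀ j : Fin n, ∑ i, (T i j.castSucc).toNat = 1 := by
    intro j
    have := hc j.castSucc
    rwa [colSum, onesVec, if_neg (Fin.castSucc_lt_last j).ne] at this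
  have hrowl : ∑ j, (T (Fin.last m) j).toNat = dr := by
    have := hr (Fin.last m)
    rwa [rowSum, onesVec, if_pos rfl] at this
  have hcoll : ∑ i, (T i (Fin.last n)).toNat = dc := by
    have := hc (Fin.last n)
    rwa [colSum, onesVec, if_pos rfl] at this
  set ε : Bool := T (Fin.last m) (Fin.last n) with hε
  set A : Finset (Fin m) := Finset.univ.filter (fun i => T i.castSucc (Fin.last n) = true) with hAdef
  set B : Finset (Fin n) := Finset.univ.filter (fun j => T (Fin.last m) j.castSucc = true) with hBdef
  have hmemA : ∀ i : Fin m, i ∈ A ↔ T i.castSucc (Fin.last n) = true := by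
    intro i; rw [hAdef]; simp
  have hmemB : ∀ j : Fin n, j ∈ B ↔ T (Fin.last m) j.castSucc = true := by
    intro j; rw [hBdef]; simp
  have hA : A.card = dc - ε.toNat := by
    have h1 : A.card + ε.toNat = dc := by
      rw [← hcoll, Fin.sum_univ_castSucc, hAdef]
      rw [sum_toNat_eq_card (fun i => T i.castSucc (Fin.last n))]
    omega
  have hB : B.card = dr - ε.toNat := by
    have h1 : B.card + ε.toNat = dr := by
      rw [← hrowl, Fin.sum_univ_castSucc, hBdef]
      rw [sum_toNat_eq_card (fun j => T (Fin.last m) j.castSucc)]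
    omega
  have hpick : ∀ i : Fin m, ∃! j, T i.castSucc j = true := fun i =>
    existsUnique_of_sum_one (hrow1 i)
  set pk : Fin m → Fin (n+1) := fun i => Fintype.choose _ (hpick i) with hpkdef
  have hpk : ∀ i, T i.castSucc (pk i) = true := fun i => Fintype.choose_spec _ (hpick i)
  have hpk_uniq : ∀ i j, T i.castSucc j = true → j = pk i := fun i j hj =>
    (hpick i).unique hj (hpk i)
  have hne : ∀ i : Fin m, i ∉ A → pk i ≠ Fin.last n := by
    intro i hi h
    exact hi ((hmemA i).mpr (h ▸ hpk i))
  have hginB : ∀ x : {i : Fin m // i ∉ A}, (pk x.1).castPred (hne x.1 x.2) ∉ B := by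
    rintro ⟨i, hi⟩ hmem
    have h1 : T (Fin.last m) ((pk i).castPred (hne i hi)).castSucc = true := (hmemB _).mp hmem
    have h2 : T i.castSucc ((pk i).castPred (hne i hi)).castSucc = true := by
      rw [Fin.castSucc_castPred]; exact hpk i
    have := eq_of_sum_one (hcol1 ((pk i).castPred (hne i hi))) h2 h1
    exact absurd this (Fin.castSucc_lt_last i).ne
  set g : {i : Fin m // i ∉ A} → {j : Fin n // j ∉ B} :=
    fun x => ⟨(pk x.1).castPred (hne x.1 x.2), hginB x⟩ with hgdef
  have ginj : Function.Injective g := by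
    rintro ⟨i, hi⟩ ⟨i', hi'⟩ hxy
    have hval : (pk i).castPred (hne i hi) = (pk i').castPred (hne i' hi') :=
      congrArg Subtype.val hxy
    have hpp : pk i = pk i' := by
      rw [← Fin.castSucc_castPred (pk i) (hne i hi), ← Fin.castSucc_castPred (pk i') (hne i' hi'), hval]
    have h1 : T i.castSucc ((pk i).castPred (hne i hi)).castSucc = true := by
      rw [Fin.castSucc_castPred]; exact hpk i
    have h2 : T i'.castSucc ((pk i).castPred (hne i hi)).castSucc = true := by
      rw [Fin.castSucc_castPred, hpp]; exact hpk i'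
    have := eq_of_sum_one (hcol1 ((pk i).castPred (hne i hi))) h1 h2
    exact Subtype.ext (Fin.castSucc_injective _ this)
  have hcardeq : Fintype.card {i : Fin m // i ∉ A} = Fintype.card {j : Fin n // j ∉ B} := by
    rw [Fintype.card_subtype_compl, Fintype.card_subtype_compl]
    rw [Fintype.card_coe, Fintype.card_coe, Fintype.card_fin, Fintype.card_fin, hA, hB]
    cases ε <;> simp <;> omega
  set e : {i : Fin m // i ∉ A} ≃ {j : Fin n // j ∉ B} :=
    Equiv.ofBijective g ((Fintype.bijective_iff_injective_and_card g).mpr ⟨ginj, hcardeq⟩) with hedef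
  have he_apply : ∀ x, e x = g x := fun x => rfl
  refine ⟨⟨ε, ⟨A, hA⟩, ⟨B, hB⟩, e⟩, ?_⟩
  funext i j
  induction i using Fin.lastCases with
  | last =>
    induction j using Fin.lastCases with
    | last => rw [dec_ll]
    | cast j =>
      rw [dec_lc]
      cases h : T (Fin.last m) j.castSucc <;> simp [hmemB, h]
  | cast i =>
    induction j using Fin.lastCases with
    | last =>
      rw [dec_cl]
      cases h : T i.castSucc (Fin.last n) <;> simp [hmemA, h]
    | cast j =>
      rw [dec_cc]
      have hiff : (∃ x : {a : Fin m // a ∉ A}, x.1 = i ∧ (e x).1 = j) ↔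
          T i.castSucc j.castSucc = true := by
        constructor
        · rintro ⟨⟨i', hi'⟩, rfl, hx2⟩
          rw [he_apply] at hx2
          have : pk i' = j.castSucc := by
            rw [← Fin.castSucc_castPred (pk i') (hne i' hi')]
            exact congrArg Fin.castSucc hx2
          rw [← this]
          exact hpk i'
        · intro hTij
          have hi : i ∉ A := by
            intro hiA
            have h1 : T i.castSucc (Fin.last n) = true := (hmemA i).mp hiA
            have := eq_of_sum_one (hrow1 i) hTij h1
            exact (Fin.castSucc_lt_last j).ne this
          refine ⟨⟨i, hi⟩, rfl, ?_⟩
          rw [he_apply]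
          have hpkij : pk i = j.castSucc := (hpk_uniq i _ hTij).symm
          apply Fin.castSucc_injective
          rw [Fin.castSucc_castPred, hpkij]
      cases h : T i.castSucc j.castSucc
      · rw [h] at hiff
        simp only [decide_eq_false_iff_not]
        intro hP
        exact absurd (hiff.mp hP) (by simp)
      · rw [h] at hiff
        exact decide_eq_true (hiff.mpr rfl)


lemma card_model (hdc1 : 1 ≤ dc) (hdcm : dc ≤ m) (hdr1 : 1 ≤ dr) (hn : n + dc = m + dr) :
    Fintype.card (Model m n dc dr)
      = Nat.choose m dc * Nat.choose n dr * Nat.factorial (m - dc)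
        + Nat.choose m (dc - 1) * Nat.choose n (dr - 1) * Nat.factorial (m - dc + 1) := by
  have key : ∀ (ε : Bool) (A : {A : Finset (Fin m) // A.card = dc - ε.toNat})
      (B : {B : Finset (Fin n) // B.card = dr - ε.toNat}),
      Fintype.card ({i : Fin m // i ∉ A.1} ≃ {j : Fin n // j ∉ B.1})
        = Nat.factorial (m - (dc - ε.toNat)) := by
    rintro ε ⟨A, hA⟩ ⟨B, hB⟩
    have c1 : Fintype.card {i : Fin m // i ∉ A} = m - (dc - ε.toNat) := by
      rw [Fintype.card_subtype_compl, Fintype.card_coe, Fintype.card_fin, hA]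
    have c2 : Fintype.card {j : Fin n // j ∉ B} = n - (dr - ε.toNat) := by
      rw [Fintype.card_subtype_compl, Fintype.card_coe, Fintype.card_fin, hB]
    have hcc : Fintype.card {i : Fin m // i ∉ A} = Fintype.card {j : Fin n // j ∉ B} := by
      rw [c1, c2]; cases ε <;> simp <;> omega
    rw [Fintype.card_equiv (Fintype.equivOfCardEq hcc), c1]
  have inner : ∀ ε : Bool,
      Fintype.card (Σ A : {A : Finset (Fin m) // A.card = dc - ε.toNat},
        Σ B : {B : Finset (Fin n) // B.card = dr - ε.toNat},
          ({i : Fin m // i ∉ A.1} ≃ {j : Fin n // j ∉ B.1}))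
        = Nat.choose m (dc - ε.toNat) * Nat.choose n (dr - ε.toNat)
            * Nat.factorial (m - (dc - ε.toNat)) := by
    intro ε
    rw [Fintype.card_sigma]
    have step : ∀ A : {A : Finset (Fin m) // A.card = dc - ε.toNat},
        Fintype.card (Σ B : {B : Finset (Fin n) // B.card = dr - ε.toNat},
          ({i : Fin m // i ∉ A.1} ≃ {j : Fin n // j ∉ B.1}))
          = Nat.choose n (dr - ε.toNat) * Nat.factorial (m - (dc - ε.toNat)) := by
      intro A
      rw [Fintype.card_sigma]
      rw [Finset.sum_congr rfl (fun B _ => key ε A B)]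
      rw [Finset.sum_const, Finset.card_univ, Fintype.card_finset_len, Fintype.card_fin,
        smul_eq_mul]
    rw [Finset.sum_congr rfl (fun A _ => step A)]
    rw [Finset.sum_const, Finset.card_univ, Fintype.card_finset_len, Fintype.card_fin,
      smul_eq_mul, mul_assoc]
  have hcardsigma : Fintype.card (Model m n dc dr)
      = Nat.choose m dc * Nat.choose n dr * Nat.factorial (m - dc)
        + Nat.choose m (dc - 1) * Nat.choose n (dr - 1) * Nat.factorial (m - (dc - 1)) := by
    rw [Fintype.card_sigma, Fintype.sum_bool, inner true, inner false]
    simp only [Bool.toNat_true, Bool.toNat_false, Nat.sub_zero, mul_assoc]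
    ring
  rw [hcardsigma]
  have hmm : m - (dc - 1) = m - dc + 1 := by omega
  rw [hmm]


/-- Let `m, d_r, d_c` be integers with `1 ≤ d_c ≤ m` and
`1 ≤ d_r ≤ n`, where `n = m + d_r − d_c`.  The number of `(m+1) × (n+1)` 0/1 matrices
with row sums `(1,1,…,1,d_r)` (last row has sum `d_r`) and column sums `(1,1,…,1,d_c)`
(last column has sum `d_c`) equals
`C(m,d_c)·C(n,d_r)·(m−d_c)! + C(m,d_c−1)·C(n,d_r−1)·(m−d_c+1)!`. -/
theorem card_tables_two_heavy_lines (m dr dc : ℕ)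
    (hdc1 : 1 ≤ dc) (hdcm : dc ≤ m) (hdr1 : 1 ≤ dr) (hdrn : dr ≤ m + dr - dc) :
    (tables (onesVec m dr) (onesVec (m + dr - dc) dc)).card
      = Nat.choose m dc * Nat.choose (m + dr - dc) dr * Nat.factorial (m - dc)
        + Nat.choose m (dc - 1) * Nat.choose (m + dr - dc) (dr - 1) *
            Nat.factorial (m - dc + 1) := by
  set n := m + dr - dc with hndef
  have hn : n + dc = m + dr := by omega
  have himg : Finset.univ.image (dec (m := m) (n := n) (dc := dc) (dr := dr))
      = tables (onesVec m dr) (onesVec n dc) := by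
    apply Finset.Subset.antisymm
    · intro T hT
      obtain ⟨M, -, rfl⟩ := Finset.mem_image.mp hT
      exact dec_mem hdc1 hdr1 M
    · intro T hT
      obtain ⟨M, hM⟩ := dec_surj hdc1 hdcm hdr1 hn T hT
      exact Finset.mem_image.mpr ⟨M, Finset.mem_univ _, hM⟩
  calc (tables (onesVec m dr) (onesVec n dc)).card
      = (Finset.univ.image (dec (m := m) (n := n) (dc := dc) (dr := dr))).card := by
        rw [himg]
    _ = (Finset.univ : Finset (Model m n dc dr)).card :=
        Finset.card_image_of_injective _ dec_inj
    _ = Fintype.card (Model m n dc dr) := Finset.card_univ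
    _ = _ := card_model hdc1 hdcm hdr1 hn

end SISBCT
end

section
/- Let m, d_r, d_c be integers with 1 ≤ d_c ≤ m and 1 ≤ d_r ≤ n, where n = m + d_r − d_c, and let Ω be the set of (m+1)×(n+1) 0/1 matrices with row sums (1,…,1,d_r) and column sums (1,…,1,d_c), where the column of sum d_c is the last column. Then the probability that a uniformly random matrix from Ω has a 1 in row m+1 of column 1 equals ( d_r(n−d_r+1) + d_c·d_r·(d_r−1) ) / ( n(n−d_r+1) + n·d_c·d_r ). -/
namespace SISBCT

/-!
Cutting a table along its heavy row and heavy column, a table with corner entry `b` amounts to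
the set `A` of light rows meeting the heavy column (`#A = d_c - b`), the set `B` of light
columns meeting the heavy row (`#B = d_r - b`), and a bijection between the remaining
`m - #A = n - #B` light rows and light columns, i.e. a permutation block. So there are
`C(m, d_c - b) C(n, d_r - b) (m - d_c + b)!` tables with corner `b`, and since a given light
column lies in a fraction `(d_r - b) / n` of the `(d_r - b)`-subsets `B`, that is the
proportion of them with a `1` at the start of the heavy row. The two corner classes are in ratio
`d_c d_r : n - d_r + 1`, which gives the formula.
-/

open Finset
open scoped Nat

variable {m n : ℕ}

def indicatorVec {k : ℕ} (s : Finset (Fin k)) : Fin k → ℕ := fun i => if i ∈ s then 1 else 0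

lemma sum_toNat_eq_card_filter {ι : Type*} [Fintype ι] (f : ι → Bool) :
    ∑ i, (f i).toNat = #{i | f i} := by
  rw [card_filter]
  exact sum_congr rfl fun i _ => by cases f i <;> rfl

lemma rowSum_eq_card_filter (T : Table m n) (i : Fin m) : rowSum T i = #{j | T i j} :=
  sum_toNat_eq_card_filter _

lemma rowSum_eq_one_iff (T : Table m n) (i : Fin m) : rowSum T i = 1 ↔ ∃! j, T i j := by
  simp [rowSum_eq_card_filter, card_eq_one_iff_existsUnique]

lemma rowSum_eq_zero_iff (T : Table m n) (i : Fin m) : rowSum T i = 0 ↔ ∀ j, T i j = false := by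
  simp [rowSum_eq_card_filter]

lemma mem_tables {r : Fin m → ℕ} {c : Fin n → ℕ} {T : Table m n} :
    T ∈ tables r c ↔ (∀ i, rowSum T i = r i) ∧ ∀ j, colSum T j = c j := by
  simp [tables]

lemma colSum_eq_rowSum_transpose (T : Table m n) (j : Fin n) :
    colSum T j = rowSum (fun j i => T i j) j := rfl

lemma rowSum_eq_indicatorVec_iff (T : Table m n) (s : Finset (Fin m)) :
    (∀ i, rowSum T i = indicatorVec s i) ↔
      (∀ i ∈ s, ∃! j, T i j) ∧ ∀ i ∉ s, ∀ j, T i j = false := by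
  refine ⟨fun h => ⟨fun i hi => ?_, fun i hi => ?_⟩, fun ⟨h1, h0⟩ i => ?_⟩
  · simpa [rowSum_eq_one_iff, indicatorVec, hi] using h i
  · simpa [rowSum_eq_zero_iff, indicatorVec, hi] using h i
  · rw [indicatorVec]
    split_ifs with hi
    · exact (rowSum_eq_one_iff T i).2 (h1 i hi)
    · exact (rowSum_eq_zero_iff T i).2 (h0 i hi)

section PermTable

variable {s : Finset (Fin m)} {t : Finset (Fin n)}

def permTable (σ : s ≃ t) : Table m n :=
  fun i j => decide (∃ h : i ∈ s, (σ ⟨i, h⟩ : Fin n) = j)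

lemma transpose_permTable (σ : s ≃ t) : (fun j i => permTable σ i j) = permTable σ.symm := by
  funext j i
  simp only [permTable, decide_eq_decide]
  constructor
  · rintro ⟨hi, rfl⟩
    exact ⟨(σ ⟨i, hi⟩).2, by simp⟩
  · rintro ⟨hj, rfl⟩
    exact ⟨(σ.symm ⟨j, hj⟩).2, by simp⟩

lemma rowSum_permTable (σ : s ≃ t) (i : Fin m) :
    rowSum (permTable σ) i = indicatorVec s i := by
  rw [indicatorVec]
  split_ifs with hi
  · rw [rowSum_eq_one_iff]
    exact ⟨σ ⟨i, hi⟩, by simp [permTable, hi], fun j hj => by simp_all [permTable]⟩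
  · rw [rowSum_eq_zero_iff]
    simp [permTable, hi]

lemma permTable_mem_tables (σ : s ≃ t) :
    permTable σ ∈ tables (indicatorVec s) (indicatorVec t) := by
  rw [mem_tables]
  refine ⟨rowSum_permTable σ, fun j => ?_⟩
  rw [colSum_eq_rowSum_transpose, transpose_permTable, rowSum_permTable]

lemma permTable_injective : Function.Injective (permTable (s := s) (t := t)) := by
  intro σ τ h
  ext ⟨i, hi⟩
  have := congrFun (congrFun h i) (σ ⟨i, hi⟩)
  simp only [permTable, hi, exists_true_left, decide_true, true_eq_decide_iff] at this
  rw [this]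

lemma exists_permTable_eq {T : Table m n}
    (hT : T ∈ tables (indicatorVec s) (indicatorVec t)) :
    ∃ σ : s ≃ t, permTable σ = T := by
  rw [mem_tables, rowSum_eq_indicatorVec_iff] at hT
  simp only [colSum_eq_rowSum_transpose, rowSum_eq_indicatorVec_iff] at hT
  obtain ⟨⟨hrow, hrow0⟩, hcol, hcol0⟩ := hT
  choose f hf hf_unique using hrow
  have hft (i : s) : f i i.2 ∈ t := by
    by_contra h
    simpa [hf] using hcol0 _ h i
  let σ : s → t := fun i => ⟨f i i.2, hft i⟩
  have hσ : Function.Bijective σ := by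
    refine ⟨fun i i' hii' => ?_, fun j => ?_⟩
    · have h : f i i.2 = f i' i'.2 := congrArg Subtype.val hii'
      exact Subtype.ext ((hcol _ (hft i)).unique (hf i i.2) (by rw [h]; exact hf i' i'.2))
    · obtain ⟨i, hij, -⟩ := hcol j j.2
      have hi : i ∈ s := by
        by_contra h
        simp [hrow0 i h] at hij
      exact ⟨⟨i, hi⟩, Subtype.ext (hf_unique i hi j hij).symm⟩
  refine ⟨Equiv.ofBijective σ hσ, funext fun i => funext fun j => ?_⟩
  by_cases hi : i ∈ s
  · have : T i j = true ↔ f i hi = j :=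
      ⟨fun h => (hf_unique i hi j h).symm, (· ▸ hf i hi)⟩
    simp only [permTable, hi, exists_true_left, σ, Equiv.ofBijective_apply]
    rw [Bool.eq_iff_iff, decide_eq_true_iff, this]
  · simp [permTable, hi, hrow0 i hi]

end PermTable

lemma card_tables_indicatorVec {s : Finset (Fin m)} {t : Finset (Fin n)} (hst : #s = #t) :
    #(tables (indicatorVec s) (indicatorVec t)) = (#s)! := by
  have himage : tables (indicatorVec s) (indicatorVec t) =
      univ.image (permTable (s := s) (t := t)) := by
    ext T
    simp only [mem_image, mem_univ, true_and]
    exact ⟨exists_permTable_eq, by rintro ⟨σ, rfl⟩; exact permTable_mem_tables σ⟩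
  rw [himage, card_image_of_injective _ permTable_injective, card_univ,
    Fintype.card_equiv (Fintype.equivOfCardEq (by simpa using hst)), Fintype.card_coe]

-- Row `last m` is the heavy row and column `last n` the heavy column.
def fromBlocks (b : Bool) (A : Finset (Fin m)) (B : Finset (Fin n)) (M : Table m n) :
    Table (m + 1) (n + 1) :=
  Fin.lastCases (Fin.lastCases b fun j => decide (j ∈ B)) fun i =>
    Fin.lastCases (decide (i ∈ A)) (M i)

def corner (T : Table (m + 1) (n + 1)) : Bool := T (Fin.last m) (Fin.last n)

def heavyColSupport (T : Table (m + 1) (n + 1)) : Finset (Fin m) :=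
  {i | T i.castSucc (Fin.last n)}

def heavyRowSupport (T : Table (m + 1) (n + 1)) : Finset (Fin n) :=
  {j | T (Fin.last m) j.castSucc}

def lightBlock (T : Table (m + 1) (n + 1)) : Table m n := fun i j => T i.castSucc j.castSucc

section FromBlocks

variable (b : Bool) (A : Finset (Fin m)) (B : Finset (Fin n)) (M : Table m n)

@[simp] lemma fromBlocks_last_last : fromBlocks b A B M (Fin.last m) (Fin.last n) = b := by
  simp [fromBlocks]

@[simp] lemma fromBlocks_last_castSucc (j : Fin n) :
    fromBlocks b A B M (Fin.last m) j.castSucc = decide (j ∈ B) := by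
  simp [fromBlocks]

@[simp] lemma fromBlocks_castSucc_last (i : Fin m) :
    fromBlocks b A B M i.castSucc (Fin.last n) = decide (i ∈ A) := by
  simp [fromBlocks]

@[simp] lemma fromBlocks_castSucc_castSucc (i : Fin m) (j : Fin n) :
    fromBlocks b A B M i.castSucc j.castSucc = M i j := by
  simp [fromBlocks]

@[simp] lemma corner_fromBlocks : corner (fromBlocks b A B M) = b := by
  simp [corner]

@[simp] lemma heavyColSupport_fromBlocks : heavyColSupport (fromBlocks b A B M) = A := by
  ext; simp [heavyColSupport]

@[simp] lemma heavyRowSupport_fromBlocks : heavyRowSupport (fromBlocks b A B M) = B := by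
  ext; simp [heavyRowSupport]

@[simp] lemma lightBlock_fromBlocks : lightBlock (fromBlocks b A B M) = M := by
  funext; simp [lightBlock]

lemma transpose_fromBlocks :
    (fun j i => fromBlocks b A B M i j) = fromBlocks b B A (fun j i => M i j) := by
  funext j i
  induction i using Fin.lastCases <;> induction j using Fin.lastCases <;> simp

lemma rowSum_fromBlocks_castSucc (i : Fin m) :
    rowSum (fromBlocks b A B M) i.castSucc = rowSum M i + (decide (i ∈ A)).toNat := by
  simp [rowSum, Fin.sum_univ_castSucc]

lemma rowSum_fromBlocks_last : rowSum (fromBlocks b A B M) (Fin.last m) = #B + b.toNat := by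
  rw [rowSum, Fin.sum_univ_castSucc]
  simp [sum_toNat_eq_card_filter]

end FromBlocks

lemma fromBlocks_eta (T : Table (m + 1) (n + 1)) :
    fromBlocks (corner T) (heavyColSupport T) (heavyRowSupport T) (lightBlock T) = T := by
  funext i j
  induction i using Fin.lastCases <;> induction j using Fin.lastCases <;>
    simp [corner, heavyColSupport, heavyRowSupport, lightBlock]

lemma add_toNat_decide_eq_one_iff {k : ℕ} {p : Prop} [Decidable p] :
    k + (decide p).toNat = 1 ↔ k = if ¬p then 1 else 0 := by
  by_cases p <;> simp [*]

lemma fromBlocks_mem_tables_iff {dr dc : ℕ} (b : Bool) (A : Finset (Fin m)) (B : Finset (Fin n))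
    (M : Table m n) :
    fromBlocks b A B M ∈ tables (onesVec m dr) (onesVec n dc) ↔
      #A + b.toNat = dc ∧ #B + b.toNat = dr ∧
        M ∈ tables (indicatorVec Aᶜ) (indicatorVec Bᶜ) := by
  simp only [mem_tables, Fin.forall_fin_succ', colSum_eq_rowSum_transpose, transpose_fromBlocks,
    rowSum_fromBlocks_castSucc, rowSum_fromBlocks_last, onesVec, (Fin.castSucc_lt_last _).ne,
    if_true, if_false, add_toNat_decide_eq_one_iff, indicatorVec, mem_compl]
  tauto

theorem card_tables_filter_corner {dr dc : ℕ} (hmn : n + dc = m + dr) (b : Bool)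
    (hbc : b.toNat ≤ dc) (hbr : b.toNat ≤ dr) (q : Finset (Fin n) → Prop) [DecidablePred q] :
    #{T ∈ tables (onesVec m dr) (onesVec n dc) |
        corner T = b ∧ q (heavyRowSupport T)} =
      m.choose (dc - b.toNat) *
        #{B ∈ powersetCard (dr - b.toNat) (univ : Finset (Fin n)) | q B} *
        (m - (dc - b.toNat))! := by
  set k := dc - b.toNat with hk
  set l := dr - b.toNat with hl
  set base := powersetCard k (univ : Finset (Fin m)) ×ˢ
    {B ∈ powersetCard l (univ : Finset (Fin n)) | q B}
  set blocks := base.sigma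
    fun p => tables (indicatorVec p.1ᶜ) (indicatorVec p.2ᶜ)
  have hfiber : ∀ p ∈ base,
      #(tables (indicatorVec p.1ᶜ) (indicatorVec p.2ᶜ)) =
        (m - k)! := by
    intro p hp
    simp only [base, mem_product, mem_filter, mem_powersetCard_univ] at hp
    rw [card_tables_indicatorVec] <;> simp only [card_compl, Fintype.card_fin, hp]
    omega
  have hblocks : #blocks = m.choose k * #{B ∈ powersetCard l (univ : Finset (Fin n)) | q B} *
      (m - k)! := by
    rw [card_sigma, sum_congr rfl hfiber, sum_const, card_product, card_powersetCard, card_fin,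
      smul_eq_mul]
  rw [← hblocks]
  symm
  refine card_nbij' (fun x => fromBlocks b x.1.1 x.1.2 x.2)
    (fun T => ⟨(heavyColSupport T, heavyRowSupport T), lightBlock T⟩) ?_ ?_ ?_ ?_
  · rintro ⟨⟨A, B⟩, M⟩ hx
    simp only [blocks, base, coe_sigma, Set.mem_sigma_iff, coe_product, Set.mem_prod, mem_coe,
      mem_filter, mem_powersetCard_univ] at hx
    obtain ⟨⟨hA, hB, hq⟩, hM⟩ := hx
    simp only [coe_filter, Set.mem_ofPred_eq, fromBlocks_mem_tables_iff, corner_fromBlocks,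
      heavyRowSupport_fromBlocks]
    exact ⟨⟨by omega, by omega, hM⟩, trivial, hq⟩
  · intro T hT
    simp only [coe_filter, Set.mem_ofPred_eq] at hT
    obtain ⟨hT, rfl, hq⟩ := hT
    rw [← fromBlocks_eta T, fromBlocks_mem_tables_iff] at hT
    obtain ⟨hA, hB, hM⟩ := hT
    simp only [blocks, base, coe_sigma, Set.mem_sigma_iff, coe_product, Set.mem_prod, mem_coe,
      mem_filter, mem_powersetCard_univ]
    exact ⟨⟨by omega, by omega, hq⟩, hM⟩
  · intro x _
    simp
  · intro T hT
    simp only [coe_filter, Set.mem_ofPred_eq] at hT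
    rw [← hT.2.1]
    exact fromBlocks_eta T

theorem card_tables_corner {dr dc : ℕ} (hmn : n + dc = m + dr) (b : Bool)
    (hbc : b.toNat ≤ dc) (hbr : b.toNat ≤ dr) :
    #{T ∈ tables (onesVec m dr) (onesVec n dc) | corner T = b} =
      m.choose (dc - b.toNat) * n.choose (dr - b.toNat) * (m - (dc - b.toNat))! := by
  simpa [card_powersetCard] using card_tables_filter_corner hmn b hbc hbr fun _ => True

lemma card_filter_mem_powersetCard_mul {α : Type*} [Fintype α] [DecidableEq α] (a : α)
    (l : ℕ) :
    #{B ∈ powersetCard l (univ : Finset α) | a ∈ B} * Fintype.card α =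
      (Fintype.card α).choose l * l := by
  cases l with
  | zero => simp [filter_singleton]
  | succ l =>
    have h := card_filter_powersetCard_subset {a} univ (l + 1) (subset_univ _) (by simp)
    simp only [singleton_subset_iff, card_singleton, card_univ, add_tsub_cancel_right] at h
    obtain ⟨N, hN⟩ : ∃ N, Fintype.card α = N + 1 :=
      Nat.exists_eq_succ_of_ne_zero (Fintype.card_pos_iff.2 ⟨a⟩).ne'
    rw [h, hN, add_tsub_cancel_right, mul_comm, Nat.add_one_mul_choose_eq]

theorem card_tables_corner_heavyRowSupport_mem_mul {dr dc : ℕ} (hmn : n + dc = m + dr)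
    (b : Bool) (hbc : b.toNat ≤ dc) (hbr : b.toNat ≤ dr) (a : Fin n) :
    #{T ∈ tables (onesVec m dr) (onesVec n dc) |
        corner T = b ∧ a ∈ heavyRowSupport T} * n =
      (dr - b.toNat) * #{T ∈ tables (onesVec m dr) (onesVec n dc) |
        corner T = b} := by
  have h := card_filter_mem_powersetCard_mul a (dr - b.toNat)
  rw [Fintype.card_fin] at h
  rw [card_tables_filter_corner hmn b hbc hbr (a ∈ ·), card_tables_corner hmn b hbc hbr,
    mul_right_comm, mul_assoc (m.choose _), h]
  ring

lemma choose_sub_one_mul {N k : ℕ} (hk : 1 ≤ k) (hkN : k ≤ N) :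
    N.choose (k - 1) * (N - k + 1) = N.choose k * k := by
  obtain ⟨j, rfl⟩ := Nat.exists_eq_add_of_le' hk
  rw [Nat.choose_succ_right_eq, add_tsub_cancel_right]
  congr 1
  omega

theorem card_tables_corner_true_mul {dr dc : ℕ} (hmn : n + dc = m + dr) (hdc : 1 ≤ dc)
    (hdcm : dc ≤ m) (hdr : 1 ≤ dr) :
    #{T ∈ tables (onesVec m dr) (onesVec n dc) | corner T = true} *
        (n - dr + 1) =
      dc * dr * #{T ∈ tables (onesVec m dr) (onesVec n dc) | corner T = false} := by
  rw [card_tables_corner hmn true hdc hdr,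
    card_tables_corner hmn false (Nat.zero_le _) (Nat.zero_le _)]
  have hfact : (m - (dc - 1))! = (m - dc + 1) * (m - dc)! := by
    rw [show m - (dc - 1) = m - dc + 1 by omega, Nat.factorial_succ]
  simp only [Bool.toNat_true, Bool.toNat_false, Nat.sub_zero, hfact]
  calc m.choose (dc - 1) * n.choose (dr - 1) * ((m - dc + 1) * (m - dc)!) * (n - dr + 1)
      = (m.choose (dc - 1) * (m - dc + 1)) * (n.choose (dr - 1) * (n - dr + 1)) * (m - dc)! := by
        ring
    _ = (m.choose dc * dc) * (n.choose dr * dr) * (m - dc)! := by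
        rw [choose_sub_one_mul hdc hdcm, choose_sub_one_mul hdr (by omega)]
    _ = dc * dr * (m.choose dc * n.choose dr * (m - dc)!) := by ring

lemma card_tables_corner_false_pos {dr dc : ℕ} (hmn : n + dc = m + dr) (hdcm : dc ≤ m) :
    0 < #{T ∈ tables (onesVec m dr) (onesVec n dc) | corner T = false} := by
  rw [card_tables_corner hmn false (Nat.zero_le _) (Nat.zero_le _)]
  simp only [Bool.toNat_false, Nat.sub_zero]
  have := Nat.choose_pos hdcm
  have := Nat.choose_pos (show dr ≤ n by omega)
  positivity

lemma card_filter_eq_add_bool {α : Type*} (s : Finset α) (f : α → Bool) (p : α → Prop)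
    [DecidablePred p] :
    #{x ∈ s | p x} = #{x ∈ s | f x = true ∧ p x} + #{x ∈ s | f x = false ∧ p x} := by
  rw [← card_filter_add_card_filter_not (fun x => f x = true), filter_filter, filter_filter]
  simp only [Bool.not_eq_true, and_comm]

theorem prob_one_in_corner_two_heavy_lines_general (m dr dc : ℕ)
    (hdc1 : 1 ≤ dc) (hdcm : dc ≤ m) (hdr1 : 1 ≤ dr) :
    (((tables (onesVec m dr) (onesVec (m + dr - dc) dc)).filter
          (fun T => T (Fin.last m) ⟨0, Nat.succ_pos _⟩ = true)).card : ℝ) /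
        ((tables (onesVec m dr) (onesVec (m + dr - dc) dc)).card : ℝ)
      = ((dr : ℝ) * (((m + dr - dc : ℕ) : ℝ) - (dr : ℝ) + 1) +
            (dc : ℝ) * (dr : ℝ) * ((dr : ℝ) - 1)) /
          (((m + dr - dc : ℕ) : ℝ) * (((m + dr - dc : ℕ) : ℝ) - (dr : ℝ) + 1) +
            ((m + dr - dc : ℕ) : ℝ) * (dc : ℝ) * (dr : ℝ)) := by
  set n := m + dr - dc
  have hmn : n + dc = m + dr := by omega
  have hn : 1 ≤ n := by omega
  set Ω := tables (onesVec m dr) (onesVec n dc)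
  set a : Fin n := ⟨0, hn⟩
  have hcol : Ω.filter (fun T => T (Fin.last m) ⟨0, Nat.succ_pos _⟩ = true) =
      Ω.filter (fun T => a ∈ heavyRowSupport T) := by
    refine filter_congr fun T _ => ?_
    simp only [a, heavyRowSupport, mem_filter, mem_univ, true_and]
    rfl
  have hΩ : #Ω = #{T ∈ Ω | corner T = true} + #{T ∈ Ω | corner T = false} := by
    simpa using card_filter_eq_add_bool Ω corner fun _ => True
  rw [hcol, card_filter_eq_add_bool _ corner, hΩ]
  have hnum_true := card_tables_corner_heavyRowSupport_mem_mul hmn true hdc1 hdr1 a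
  have hnum_false :=
    card_tables_corner_heavyRowSupport_mem_mul hmn false (Nat.zero_le _) (Nat.zero_le _) a
  have hratio := card_tables_corner_true_mul hmn hdc1 hdcm hdr1
  have hpos := card_tables_corner_false_pos (dr := dr) hmn hdcm
  simp only [Bool.toNat_true, Bool.toNat_false, Nat.sub_zero] at hnum_true hnum_false
  rify [hdr1, show dr ≤ n by omega] at hnum_true hnum_false hratio hpos
  have hn' : (0 : ℝ) < n - dr + 1 := by
    have : (dr : ℝ) ≤ n := by exact_mod_cast (show dr ≤ n by omega)
    linarith
  push_cast
  rw [div_eq_div_iff (by positivity) (by positivity)]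
  linear_combination ((n - dr + 1 : ℝ) + dc * dr) * (hnum_true + hnum_false) - hratio

/-- Let `m, d_r, d_c` be integers with `1 ≤ d_c ≤ m` and
`1 ≤ d_r ≤ n`, where `n = m + d_r − d_c`, and let `Ω` be the set of `(m+1) × (n+1)`
0/1 matrices with row sums `(1,…,1,d_r)` and column sums `(1,…,1,d_c)` (the column of
sum `d_c` being the last one).  Then the probability that a uniformly random matrix
from `Ω` has a `1` in row `m+1` of column `1` equals
`(d_r(n−d_r+1) + d_c·d_r·(d_r−1)) / (n(n−d_r+1) + n·d_c·d_r)`. -/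
theorem prob_one_in_corner_two_heavy_lines (m dr dc : ℕ)
    (hdc1 : 1 ≤ dc) (hdcm : dc ≤ m) (hdr1 : 1 ≤ dr) (hdrn : dr ≤ m + dr - dc) :
    (((tables (onesVec m dr) (onesVec (m + dr - dc) dc)).filter
          (fun T => T (Fin.last m) ⟨0, Nat.succ_pos _⟩ = true)).card : ℝ) /
        ((tables (onesVec m dr) (onesVec (m + dr - dc) dc)).card : ℝ)
      = ((dr : ℝ) * (((m + dr - dc : ℕ) : ℝ) - (dr : ℝ) + 1) +
            (dc : ℝ) * (dr : ℝ) * ((dr : ℝ) - 1)) /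
          (((m + dr - dc : ℕ) : ℝ) * (((m + dr - dc : ℕ) : ℝ) - (dr : ℝ) + 1) +
            ((m + dr - dc : ℕ) : ℝ) * (dc : ℝ) * (dr : ℝ)) :=
  prob_one_in_corner_two_heavy_lines_general m dr dc hdc1 hdcm hdr1
end SISBCT
end
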